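/- In a semigroup with DIT elements x̄, ȳ, z̄ (satisfying x̄ * ȳ = ȳ and z̄ * ȳ = x̄), if x̄ * x̄ = ȳ * x̄ then x̄ = ȳ. -/

import Mathlib

/-! `ȳ` is idempotent, since `ȳ ȳ = ȳ x̄ ȳ = x̄ x̄ ȳ = ȳ`; hence `x̄ = z̄ ȳ` is fixed by right
multiplication with `ȳ`, so `x̄ = x̄ ȳ = ȳ`. -/

theorem isIdempotentElem_of_mul_eq_self_of_mul_self_eq {S : Type*} [Semigroup S] {x y : S}
    (hxy : x * y = y) (h : x * x = y * x) : IsIdempotentElem y :=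
  calc y * y = y * x * y := by rw [mul_assoc, hxy]
    _ = y := by rw [← h, mul_assoc, hxy, hxy]

theorem IsIdempotentElem.mul_eq_self_of_mul_eq {S : Type*} [Semigroup S] {x y z : S}
    (hy : IsIdempotentElem y) (hzy : z * y = x) : x * y = x := by
  rw [← hzy, mul_assoc, hy.eq]

theorem stmt {S : Type*} [Semigroup S] (x y z : S) (h1 : x * y = y) (h2 : z * y = x) (h : x * x = y * x) : x = y := by
  have hy : IsIdempotentElem y := isIdempotentElem_of_mul_eq_self_of_mul_self_eq h1 h
  calc x = x * y := (hy.mul_eq_self_of_mul_eq h2).symm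
    _ = y := h1
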